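/- arXiv:1104.2772 — 5 statements merged into one kernel-verified Lean document; each statement's English description precedes it below -/
import Mathlib

section
/- Let $M>0$ and let $r:\mathbb{R}\to(2M,\infty)$ be the inverse of the Regge-Wheeler coordinate. Then there exists $C>0$ such that $|r(x) - 2M - M\sqrt{e}\, e^{x/(2M)}| \leq C e^{x/M}$ for all sufficiently negative $x$. -/
/-! With `ρ = r(x) - 2M` and `A = M √e e^{x/(2M)}`, exponentiating the defining relation of the
Regge-Wheeler coordinate gives the fixed-point equation `ρ = A e^{-ρ/(2M)}`. Hence `0 ≤ ρ ≤ A` and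
`A - ρ = A (1 - e^{-ρ/(2M)}) ≤ A ρ / (2M) ≤ A² / (2M) = (M e / 2) e^{x/M}`, for every `x`. -/

open Real

lemma abs_sub_le_sq_div_of_eq_mul_exp {c ρ A : ℝ} (hc : 0 < c) (hρ : 0 ≤ ρ)
    (h : ρ = A * exp (-ρ / c)) : |A - ρ| ≤ A ^ 2 / c := by
  have hA : 0 ≤ A := nonneg_of_mul_nonneg_left (h ▸ hρ) (exp_pos _)
  have hexp_le_one : exp (-ρ / c) ≤ 1 :=
    exp_le_one_iff.mpr (div_nonpos_of_nonpos_of_nonneg (neg_nonpos.mpr hρ) hc.le)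
  have hρA : ρ ≤ A := by linarith [mul_le_of_le_one_right hA hexp_le_one]
  have hexp_ge : 1 - ρ / c ≤ exp (-ρ / c) := by linarith [add_one_le_exp (-ρ / c), neg_div c ρ]
  rw [abs_of_nonneg (by linarith)]
  calc A - ρ = A * (1 - exp (-ρ / c)) := by linear_combination -h
    _ ≤ A * (ρ / c) := by gcongr; linarith
    _ ≤ A * (A / c) := by gcongr
    _ = A ^ 2 / c := by ring

lemma regge_wheeler_sub_horizon_eq {M r x : ℝ} (hM : 0 < M) (hr : 2 * M < r)
    (h : r + 2*M*log (r - 2*M) - 3*M - 2*M*log M = x) :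
    r - 2*M = M * √(exp 1) * exp (x / (2*M)) * exp (-(r - 2*M) / (2*M)) := by
  have hρ : 0 < r - 2*M := by linarith
  have hlog : log (r - 2*M) = log M + 1 / 2 + x / (2*M) + -(r - 2*M) / (2*M) := by
    field_simp; linarith
  calc r - 2*M = exp (log (r - 2*M)) := (exp_log hρ).symm
    _ = _ := by rw [hlog, exp_add, exp_add, exp_add, exp_log hM, exp_half]

lemma regge_wheeler_leading_term_sq (M x : ℝ) (hM : 0 < M) :
    (M * √(exp 1) * exp (x / (2*M))) ^ 2 / (2*M) = M * exp 1 / 2 * exp (x / M) := by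
  rw [mul_pow, mul_pow, sq_sqrt (exp_pos 1).le, ← exp_nat_mul]
  field_simp
  ring_nf

/-- The inverse `r(x)` of the Regge-Wheeler coordinate satisfies
`r(x) = 2M + M√e e^{x/(2M)} + O(e^{x/M})` as `x → -∞`. -/
theorem inverse_regge_wheeler_asymptotics_at_horizon (M : ℝ) (hM : 0 < M)
    (r : ℝ → ℝ) (hr : ∀ x, 2*M < r x)
    (hinv : ∀ x, r x + 2*M*Real.log (r x - 2*M) - 3*M - 2*M*Real.log M = x) :
    ∃ C > 0, ∃ X : ℝ, ∀ x ≤ X,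
      |r x - 2*M - M * Real.sqrt (Real.exp 1) * Real.exp (x / (2*M))| ≤ C * Real.exp (x / M) := by
  refine ⟨M * exp 1 / 2, by positivity, 0, fun x _ => ?_⟩
  have hfixed := regge_wheeler_sub_horizon_eq hM (hr x) (hinv x)
  have hbound := abs_sub_le_sq_div_of_eq_mul_exp (by positivity) (sub_nonneg.mpr (hr x).le) hfixed
  rwa [abs_sub_comm, regge_wheeler_leading_term_sq M x hM] at hbound
end

section
/- Under the same assumptions as the previous statement (Jost solutions $f^\pm$ with $W(\overline{f^+},f^+) = W(f^-,\overline{f^-}) = 2i\sigma$, $\sigma>0$, and $f^- = af^+ + b\overline{f^+}$), the Wronskian satisfies $W(f^-, f^+) = 2i\sigma\, b$, and consequently $|W(f^-,f^+)| \geq 2\sigma$. -/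
/-!
Write `f⁻ = a f⁺ + b f̄⁺`. The Wronskian is bilinear and `W(f⁺, f⁺) = 0`, so
`W(f⁻, f⁺) = b W(f̄⁺, f⁺) = 2iσ b`. In the same way `W(f⁻, f̄⁻) = (|b|² - |a|²) W(f̄⁺, f⁺)`,
so the two normalisations force `|b|² = 1 + |a|² ≥ 1`.
-/

open Complex ComplexConjugate

lemma HasDerivAt.const_mul_add_const_mul_conj {f : ℝ → ℂ} {f' : ℂ} {x : ℝ}
    (hf : HasDerivAt f f' x) (a b : ℂ) :
    HasDerivAt (fun y => a * f y + b * conj (f y)) (a * f' + b * conj f') x :=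
  (hf.const_mul a).add (hf.star.const_mul b)

lemma wronskian_const_mul_add_const_mul_conj (a b u u' : ℂ) :
    (a * u + b * conj u) * u' - (a * u' + b * conj u') * u
      = b * (conj u * u' - conj u' * u) := by
  ring

lemma conj_wronskian_const_mul_add_const_mul_conj (a b u u' : ℂ) :
    (a * u + b * conj u) * conj (a * u' + b * conj u')
        - (a * u' + b * conj u') * conj (a * u + b * conj u)
      = ((normSq b - normSq a : ℝ) : ℂ) * (conj u * u' - conj u' * u) := by
  simp only [map_add, map_mul, conj_conj]
  push_cast [← mul_conj]
  ring

lemma one_le_norm_of_normSq_sub_normSq_eq_one {a b : ℂ} (h : normSq b - normSq a = 1) :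
    1 ≤ ‖b‖ := by
  rw [← one_le_sq_iff₀ (norm_nonneg b), Complex.sq_norm]
  linarith [normSq_nonneg a]

theorem wronskian_lower_bound_general
    (σ : ℝ) (hσ : 0 < σ) (fp fm : ℝ → ℂ)
    (hfp : ContDiff ℝ 2 fp)
    (hWp : ∀ x, (starRingEnd ℂ) (fp x) * deriv fp x
        - (starRingEnd ℂ) (deriv fp x) * fp x = 2 * Complex.I * σ)
    (hWm : ∀ x, fm x * (starRingEnd ℂ) (deriv fm x)
        - deriv fm x * (starRingEnd ℂ) (fm x) = 2 * Complex.I * σ)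
    (a b : ℂ) (hab : ∀ x, fm x = a * fp x + b * (starRingEnd ℂ) (fp x)) :
    (∀ x, fm x * deriv fp x - deriv fm x * fp x = 2 * Complex.I * σ * b) ∧
    (∀ x, 2 * σ ≤ ‖fm x * deriv fp x - deriv fm x * fp x‖) := by
  have hdfm (x : ℝ) : deriv fm x = a * deriv fp x + b * conj (deriv fp x) := by
    rw [funext hab]
    exact ((hfp.differentiable (by norm_num) x).hasDerivAt.const_mul_add_const_mul_conj a b).deriv
  have hW (x : ℝ) : fm x * deriv fp x - deriv fm x * fp x = 2 * I * σ * b := by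
    rw [hab x, hdfm x, wronskian_const_mul_add_const_mul_conj, hWp x]
    ring
  have hnorm : normSq b - normSq a = 1 := by
    have h := hWm 0
    rw [hab 0, hdfm 0, conj_wronskian_const_mul_add_const_mul_conj, hWp 0,
      mul_eq_right₀ (by simp [hσ.ne'])] at h
    exact_mod_cast h
  refine ⟨hW, fun x => ?_⟩
  calc 2 * σ = 2 * σ * 1 := (mul_one _).symm
    _ ≤ 2 * σ * ‖b‖ := by gcongr; exact one_le_norm_of_normSq_sub_normSq_eq_one hnorm
    _ = ‖fm x * deriv fp x - deriv fm x * fp x‖ := by simp [hW x, abs_of_pos hσ]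

/-- Under the same assumptions as the previous statement, the Wronskian of the Jost
solutions satisfies `W(f⁻, f⁺) = 2iσ b`, and consequently `|W(f⁻, f⁺)| ≥ 2σ`. -/
theorem wronskian_lower_bound (V : ℝ → ℝ) (hV : Continuous V)
    (σ : ℝ) (hσ : 0 < σ) (fp fm : ℝ → ℂ)
    (hfp : ContDiff ℝ 2 fp) (hfm : ContDiff ℝ 2 fm)
    (hep : ∀ x, -(deriv (deriv fp) x) + (V x : ℂ) * fp x = (σ:ℂ)^2 * fp x)
    (hem : ∀ x, -(deriv (deriv fm) x) + (V x : ℂ) * fm x = (σ:ℂ)^2 * fm x)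
    (hWp : ∀ x, (starRingEnd ℂ) (fp x) * deriv fp x
        - (starRingEnd ℂ) (deriv fp x) * fp x = 2 * Complex.I * σ)
    (hWm : ∀ x, fm x * (starRingEnd ℂ) (deriv fm x)
        - deriv fm x * (starRingEnd ℂ) (fm x) = 2 * Complex.I * σ)
    (a b : ℂ) (hab : ∀ x, fm x = a * fp x + b * (starRingEnd ℂ) (fp x)) :
    (∀ x, fm x * deriv fp x - deriv fm x * fp x = 2 * Complex.I * σ * b) ∧
    (∀ x, 2 * σ ≤ ‖fm x * deriv fp x - deriv fm x * fp x‖) :=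
  wronskian_lower_bound_general σ hσ fp fm hfp hWp hWm a b hab
end

section
/- Let $V:\mathbb{R}\to\mathbb{R}$ be continuous with $|V(y)| \leq Ce^{y/(4M)}$ for all $y \leq a$ (some $a\in\mathbb{R}$, $C, M > 0$). Then there exists a solution $\psi_1$ of $-\psi_1'' + V\psi_1 = 0$ on $(-\infty, a]$ satisfying $|\psi_1(x) - 1| \leq C' e^{x/(8M)}$ for all $x \leq a$ and some constant $C'$. Moreover $\psi_1$ can be obtained as the unique bounded solution of the Volterra equation $\psi_1(x) = 1 - \int_{-\infty}^x (y-x)V(y)\psi_1(y)\,dy$. -/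
/-!
Put `c = 1/(4M)` and extend `V` beyond `a` by the constant `V a`, so that `|V y| ≤ C e^{cy}` on
all of `ℝ`. Since `∫_{-∞}^x (x - y) e^{kcy} dy ≤ 4 e^{kcx} / (kc)²`, the Picard iterates
`u₀ = 1`, `u_{n+1}(x) = -∫_{-∞}^x (y - x) V(y) u_n(y) dy` satisfy `|u_n(x)| ≤ zⁿ / (n!)²` with
`z = 4C e^{cx} / c²`. Their sum converges locally uniformly, solves the Volterra equation, and
differentiating the equation twice gives `ψ'' = Vψ`. The same estimate, iterated on the
difference of two bounded solutions, bounds it by `D zⁿ / (n!)²` for every `n`, so it vanishes;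
and one application of it gives `|ψ - 1| ≤ 4CB e^{cx} / c² ≤ C' e^{x/(8M)}`.

A competing bounded solution is not assumed measurable. Wherever its integrand is not integrable
the Bochner integral is `0`, so the solution equals `1` there; this is enough to recover the
measurability of `V ψ'` on `(-∞, a]`.
-/

open MeasureTheory Set Filter Real Topology
open scoped Nat

namespace Volterra

section ExponentialWeight

variable {c x y A : ℝ} {g : ℝ → ℝ}

lemma nonneg_of_abs_le_mul_exp {u : ℝ} (h : |u| ≤ A * exp (c * y)) : 0 ≤ A :=
  nonneg_of_mul_nonneg_left ((abs_nonneg _).trans h) (exp_pos _)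

lemma sub_mul_exp_le (hc : 0 < c) :
    (x - y) * exp (c * y) ≤ 2 / c * exp (c / 2 * x) * exp (c / 2 * y) := by
  have hlin : x - y ≤ 2 / c * exp (c / 2 * (x - y)) := by
    have := add_one_le_exp (c / 2 * (x - y))
    rw [div_mul_eq_mul_div, le_div_iff₀ hc]
    nlinarith
  calc (x - y) * exp (c * y) ≤ 2 / c * exp (c / 2 * (x - y)) * exp (c * y) := by gcongr
    _ = 2 / c * exp (c / 2 * x) * exp (c / 2 * y) := by
      rw [mul_assoc, ← exp_add, mul_assoc, ← exp_add]; ring_nf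

lemma abs_mul_le_mul_exp {f : ℝ → ℝ} {B : ℝ} (hg : |g y| ≤ A * exp (c * y))
    (hf : |f y| ≤ B) :
    |g y * f y| ≤ A * B * exp (c * y) := by
  rw [abs_mul, mul_right_comm]
  exact mul_le_mul hg hf (abs_nonneg _) ((abs_nonneg _).trans hg)

lemma abs_sub_mul_le (hc : 0 < c) (hg : ∀ y ≤ x, |g y| ≤ A * exp (c * y)) (hyx : y ≤ x) :
    |(y - x) * g y| ≤ A * (2 / c * exp (c / 2 * x)) * exp (c / 2 * y) := by
  have hA : 0 ≤ A := nonneg_of_abs_le_mul_exp (hg x le_rfl)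
  rw [abs_mul, abs_sub_comm, abs_of_nonneg (sub_nonneg.2 hyx)]
  calc (x - y) * |g y| ≤ (x - y) * (A * exp (c * y)) := by
        gcongr
        exact hg y hyx
    _ = A * ((x - y) * exp (c * y)) := by ring
    _ ≤ A * (2 / c * exp (c / 2 * x) * exp (c / 2 * y)) := by grw [sub_mul_exp_le hc]
    _ = _ := by ring

variable (hc : 0 < c) (hm : AEStronglyMeasurable g (volume.restrict (Iic x)))
  (hg : ∀ y ≤ x, |g y| ≤ A * exp (c * y))
include hc hm hg

lemma integrableOn_sub_mul : IntegrableOn (fun y => (y - x) * g y) (Iic x) :=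
  ((integrableOn_exp_mul_Iic (half_pos hc) x).const_mul _).mono'
    ((continuous_id.sub continuous_const).aestronglyMeasurable.mul hm)
    ((ae_restrict_iff' measurableSet_Iic).2 (ae_of_all _ fun _ hy => abs_sub_mul_le hc hg hy))

lemma integral_abs_sub_mul_le :
    ∫ y in Iic x, |(y - x) * g y| ≤ 4 * A / c ^ 2 * exp (c * x) := by
  calc ∫ y in Iic x, |(y - x) * g y|
      ≤ ∫ y in Iic x, A * (2 / c * exp (c / 2 * x)) * exp (c / 2 * y) :=
        setIntegral_mono_on (integrableOn_sub_mul hc hm hg).abs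
          ((integrableOn_exp_mul_Iic (half_pos hc) x).const_mul _) measurableSet_Iic
          fun _ hy => abs_sub_mul_le hc hg hy
    _ = 4 * A / c ^ 2 * exp (c * x) := by
      rw [integral_const_mul, integral_exp_mul_Iic (half_pos hc),
        show c * x = c / 2 * x + c / 2 * x by ring, exp_add]
      field_simp
      ring

lemma integrableOn_Iic_of_abs_le_exp : IntegrableOn g (Iic x) :=
  ((integrableOn_exp_mul_Iic hc x).const_mul A).mono' hm
    ((ae_restrict_iff' measurableSet_Iic).2 (ae_of_all _ fun y hy => hg y hy))

lemma integrableOn_Iic_id_mul_of_abs_le_exp : IntegrableOn (fun y => y * g y) (Iic x) := by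
  have hsplit : (fun y => y * g y) = fun y => (y - x) * g y + x * g y := by
    funext y; ring
  rw [hsplit]
  exact (integrableOn_sub_mul hc hm hg).add
    ((integrableOn_Iic_of_abs_le_exp hc hm hg).const_mul x)

end ExponentialWeight

section Derivatives

variable {g : ℝ → ℝ} (hg : Continuous g) (hint : ∀ b, IntegrableOn g (Iic b))
include hg hint

lemma hasDerivAt_integral_Iic (x : ℝ) :
    HasDerivAt (fun t => ∫ y in Iic t, g y) (g x) x := by
  have hsplit : ∀ᶠ t in 𝓝 x,
      (∫ y in Iic (x - 1), g y) + ∫ y in (x - 1)..t, g y = ∫ y in Iic t, g y := by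
    filter_upwards [eventually_gt_nhds (sub_one_lt x)] with t ht
    rw [intervalIntegral.integral_of_le ht.le, ← setIntegral_union (Iic_disjoint_Ioc le_rfl)
      measurableSet_Ioc (hint _) ((hint t).mono_set Ioc_subset_Iic_self),
      Iic_union_Ioc_eq_Iic ht.le]
  have hii : IntervalIntegrable g volume (x - 1) x :=
    (intervalIntegrable_iff_integrableOn_Ioc_of_le (sub_one_lt x).le).2
      ((hint x).mono_set Ioc_subset_Iic_self)
  exact ((intervalIntegral.integral_hasDerivAt_right hii
    hg.stronglyMeasurable.stronglyMeasurableAtFilter hg.continuousAt).const_add _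
    ).congr_of_eventuallyEq (hsplit.mono fun _ h => h.symm)

lemma hasDerivAt_integral_Iic_sub_mul (hint' : ∀ b, IntegrableOn (fun y => y * g y) (Iic b))
    (x : ℝ) :
    HasDerivAt (fun t => ∫ y in Iic t, (y - t) * g y) (-∫ y in Iic x, g y) x := by
  have hsplit : (fun t => ∫ y in Iic t, (y - t) * g y)
      = fun t => (∫ y in Iic t, y * g y) - t * ∫ y in Iic t, g y := by
    funext t
    simp_rw [sub_mul]
    rw [integral_sub (hint' t) ((hint t).const_mul t), integral_const_mul]
  have hderiv : HasDerivAt (fun t => (∫ y in Iic t, y * g y) - t * ∫ y in Iic t, g y)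
      (x * g x - (1 * (∫ y in Iic x, g y) + x * g x)) x :=
    (hasDerivAt_integral_Iic (continuous_id.mul hg) hint' x).sub
      ((hasDerivAt_id x).mul (hasDerivAt_integral_Iic hg hint x))
  rw [hsplit]
  convert hderiv using 1
  ring

lemma deriv_deriv_one_sub_integral_Iic_sub_mul
    (hint' : ∀ b, IntegrableOn (fun y => y * g y) (Iic b)) (x : ℝ) :
    deriv (deriv fun t => 1 - ∫ y in Iic t, (y - t) * g y) x = g x := by
  have hderiv : deriv (fun t => 1 - ∫ y in Iic t, (y - t) * g y) = fun t => ∫ y in Iic t, g y :=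
    funext fun t => by
      simpa using ((hasDerivAt_integral_Iic_sub_mul hg hint hint' t).const_sub 1).deriv
  rw [hderiv]
  exact (hasDerivAt_integral_Iic hg hint x).deriv

end Derivatives

section IterateBound

lemma summable_pow_div_factorial_sq {z : ℝ} (hz : 0 ≤ z) :
    Summable fun n : ℕ => z ^ n / (n ! : ℝ) ^ 2 :=
  (Real.summable_pow_div_factorial z).of_nonneg_of_le (fun _ => by positivity) fun n =>
    div_le_div_of_nonneg_left (by positivity) (by positivity)
      (le_self_pow₀ (Nat.one_le_cast.2 n.factorial_pos) two_ne_zero)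

variable {V f : ℝ → ℝ} {C c D x y : ℝ} {n : ℕ}

lemma summable_iterate_bound (hC : 0 ≤ C) (c x : ℝ) :
    Summable fun n : ℕ => (4 * C / c ^ 2 * exp (c * x)) ^ n / (n ! : ℝ) ^ 2 :=
  summable_pow_div_factorial_sq (by positivity)

lemma abs_mul_le_of_iterate_bound (hV : |V y| ≤ C * exp (c * y))
    (hf : |f y| ≤ D * (4 * C / c ^ 2 * exp (c * y)) ^ n / (n ! : ℝ) ^ 2) :
    |V y * f y| ≤ D * (4 * C / c ^ 2) ^ n / (n ! : ℝ) ^ 2 * C * exp ((n + 1) * c * y) := by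
  rw [abs_mul]
  refine (mul_le_mul hV hf (abs_nonneg _) ((abs_nonneg _).trans hV)).trans_eq ?_
  rw [mul_pow, ← exp_nat_mul, show ((n : ℝ) + 1) * c * y = c * y + n * (c * y) by ring, exp_add]
  ring

lemma integral_abs_sub_mul_le_of_iterate_bound (hc : 0 < c)
    (hm : AEStronglyMeasurable (fun y => V y * f y) (volume.restrict (Iic x)))
    (hV : ∀ y ≤ x, |V y| ≤ C * exp (c * y))
    (hf : ∀ y ≤ x, |f y| ≤ D * (4 * C / c ^ 2 * exp (c * y)) ^ n / (n ! : ℝ) ^ 2) :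
    IntegrableOn (fun y => (y - x) * (V y * f y)) (Iic x) ∧
      ∫ y in Iic x, |(y - x) * (V y * f y)|
        ≤ D * (4 * C / c ^ 2 * exp (c * x)) ^ (n + 1) / ((n + 1)! : ℝ) ^ 2 := by
  have hc' : 0 < (n + 1) * c := by positivity
  have hbound := fun y hy => abs_mul_le_of_iterate_bound (hV y hy) (hf y hy)
  refine ⟨integrableOn_sub_mul hc' hm hbound,
    (integral_abs_sub_mul_le hc' hm hbound).trans_eq ?_⟩
  rw [show ((n : ℝ) + 1) * c * x = (n + 1 : ℕ) * (c * x) by push_cast; ring, exp_nat_mul,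
    Nat.factorial_succ]
  push_cast
  simp only [mul_pow, div_pow]
  field_simp
  ring

end IterateBound

section NeumannSeries

/-- The terms of the Neumann series of `ψ = 1 - ∫_{-∞}^x (y - x) W(y) ψ(y) dy`. -/
noncomputable def neumannTerm (W : ℝ → ℝ) : ℕ → ℝ → ℝ
  | 0 => fun _ => 1
  | n + 1 => fun x => -∫ y in Iic x, (y - x) * (W y * neumannTerm W n y)

noncomputable def neumannSum (W : ℝ → ℝ) (x : ℝ) : ℝ :=
  ∑' n, neumannTerm W n x

variable {W : ℝ → ℝ} {C c : ℝ} (hc : 0 < c) (hW : Continuous W)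
  (hWb : ∀ y, |W y| ≤ C * exp (c * y))
include hc hW hWb

lemma continuous_neumannTerm_and_abs_le (n : ℕ) :
    Continuous (neumannTerm W n) ∧
      ∀ x, |neumannTerm W n x| ≤ (4 * C / c ^ 2 * exp (c * x)) ^ n / (n ! : ℝ) ^ 2 := by
  induction n with
  | zero => exact ⟨continuous_const, fun x => by simp [neumannTerm]⟩
  | succ n ih =>
    obtain ⟨hcont, hbound⟩ := ih
    have hbound' : ∀ y, |neumannTerm W n y|
        ≤ 1 * (4 * C / c ^ 2 * exp (c * y)) ^ n / (n ! : ℝ) ^ 2 := by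
      simpa only [one_mul] using hbound
    have hg := hW.mul hcont
    have hexp := fun y => abs_mul_le_of_iterate_bound (hWb y) (hbound' y)
    have hc' : 0 < (n + 1) * c := by positivity
    have hint := fun b => integrableOn_Iic_of_abs_le_exp hc' (x := b) hg.aestronglyMeasurable
      fun y _ => hexp y
    have hint' := fun b => integrableOn_Iic_id_mul_of_abs_le_exp hc' (x := b)
      hg.aestronglyMeasurable fun y _ => hexp y
    refine ⟨continuous_iff_continuousAt.2 fun x =>
      (hasDerivAt_integral_Iic_sub_mul hg hint hint' x).continuousAt.neg, fun x => ?_⟩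
    calc |neumannTerm W (n + 1) x| ≤ ∫ y in Iic x, |(y - x) * (W y * neumannTerm W n y)| := by
          rw [neumannTerm, abs_neg]
          exact abs_integral_le_integral_abs
      _ ≤ _ := by
          simpa only [one_mul] using (integral_abs_sub_mul_le_of_iterate_bound hc
            hg.aestronglyMeasurable.restrict (fun y _ => hWb y) fun y _ => hbound' y).2

lemma summable_norm_neumannTerm (x : ℝ) : Summable fun n => ‖neumannTerm W n x‖ :=
  (summable_iterate_bound (nonneg_of_abs_le_mul_exp (hWb 0)) c x).of_nonneg_of_le
    (fun _ => abs_nonneg _) fun n => (continuous_neumannTerm_and_abs_le hc hW hWb n).2 x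

lemma abs_neumannTerm_le {x b : ℝ} (hxb : x ≤ b) (n : ℕ) :
    |neumannTerm W n x| ≤ (4 * C / c ^ 2 * exp (c * b)) ^ n / (n ! : ℝ) ^ 2 := by
  have hC := nonneg_of_abs_le_mul_exp (hWb 0)
  refine ((continuous_neumannTerm_and_abs_le hc hW hWb n).2 x).trans ?_
  gcongr

lemma abs_neumannSum_le {x b : ℝ} (hxb : x ≤ b) :
    |neumannSum W x| ≤ ∑' n : ℕ, (4 * C / c ^ 2 * exp (c * b)) ^ n / (n ! : ℝ) ^ 2 :=
  (norm_tsum_le_tsum_norm (summable_norm_neumannTerm hc hW hWb x)).trans <|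
    (summable_norm_neumannTerm hc hW hWb x).tsum_le_tsum (abs_neumannTerm_le hc hW hWb hxb)
      (summable_iterate_bound (nonneg_of_abs_le_mul_exp (hWb 0)) c b)

lemma continuous_neumannSum : Continuous (neumannSum W) :=
  continuous_iff_continuousAt.2 fun x =>
    (continuousOn_tsum (fun n => (continuous_neumannTerm_and_abs_le hc hW hWb n).1.continuousOn)
      (summable_iterate_bound (nonneg_of_abs_le_mul_exp (hWb 0)) c (x + 1))
      fun n _ hy => abs_neumannTerm_le hc hW hWb hy n).continuousAt
      (Iic_mem_nhds (lt_add_one x))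

lemma integral_Iic_sub_mul_neumannSum (x : ℝ) :
    ∫ y in Iic x, (y - x) * (W y * neumannSum W y) = 1 - neumannSum W x := by
  have hstep := fun n => integral_abs_sub_mul_le_of_iterate_bound (D := 1) (x := x) hc
    (hW.mul (continuous_neumannTerm_and_abs_le hc hW hWb n).1).aestronglyMeasurable.restrict
    (fun y _ => hWb y)
    fun y _ => by simpa only [one_mul] using (continuous_neumannTerm_and_abs_le hc hW hWb n).2 y
  have hsummable : Summable fun n => ∫ y in Iic x, ‖(y - x) * (W y * neumannTerm W n y)‖ :=
    ((summable_nat_add_iff 1).2 (summable_iterate_bound (nonneg_of_abs_le_mul_exp (hWb 0)) c x)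
      ).of_nonneg_of_le (fun _ => integral_nonneg fun _ => norm_nonneg _)
      fun n => by simpa only [Real.norm_eq_abs, one_mul] using (hstep n).2
  have hshift : ∑' n, neumannTerm W (n + 1) x = neumannSum W x - 1 := by
    rw [neumannSum, (summable_norm_neumannTerm hc hW hWb x).of_norm.tsum_eq_zero_add]
    simp [neumannTerm]
  calc ∫ y in Iic x, (y - x) * (W y * neumannSum W y)
      = ∫ y in Iic x, ∑' n, (y - x) * (W y * neumannTerm W n y) := by
        simp_rw [neumannSum, ← mul_assoc, tsum_mul_left]
    _ = ∑' n, ∫ y in Iic x, (y - x) * (W y * neumannTerm W n y) :=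
        (integral_tsum_of_summable_integral_norm (fun n => (hstep n).1) hsummable).symm
    _ = 1 - neumannSum W x := by
        simp_rw [show ∀ n, ∫ y in Iic x, (y - x) * (W y * neumannTerm W n y)
          = -neumannTerm W (n + 1) x from fun n => (neg_neg _).symm, tsum_neg, hshift]
        ring

lemma deriv_deriv_neumannSum (x : ℝ) :
    deriv (deriv (neumannSum W)) x = W x * neumannSum W x := by
  have hC := nonneg_of_abs_le_mul_exp (hWb 0)
  have hg : Continuous fun y => W y * neumannSum W y := hW.mul (continuous_neumannSum hc hW hWb)
  have hexp : ∀ b, ∀ y ≤ b, |W y * neumannSum W y|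
      ≤ C * (∑' n : ℕ, (4 * C / c ^ 2 * exp (c * b)) ^ n / (n ! : ℝ) ^ 2) * exp (c * y) :=
    fun b y hy => abs_mul_le_mul_exp (hWb y) (abs_neumannSum_le hc hW hWb hy)
  have hψ : neumannSum W = fun t => 1 - ∫ y in Iic t, (y - t) * (W y * neumannSum W y) :=
    funext fun t => by rw [integral_Iic_sub_mul_neumannSum hc hW hWb]; ring
  conv_lhs => rw [hψ]
  exact deriv_deriv_one_sub_integral_Iic_sub_mul hg
    (fun b => integrableOn_Iic_of_abs_le_exp hc hg.aestronglyMeasurable.restrict (hexp b))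
    (fun b => integrableOn_Iic_id_mul_of_abs_le_exp hc hg.aestronglyMeasurable.restrict (hexp b)) x

end NeumannSeries

section Measurability

variable {μ : Measure ℝ} [NullSingletonClass μ]

lemma aestronglyMeasurable_of_sub_mul {h : ℝ → ℝ} {x : ℝ}
    (hm : AEStronglyMeasurable (fun y => (y - x) * h y) μ) : AEStronglyMeasurable h μ := by
  have hinv : AEStronglyMeasurable (fun y => (y - x)⁻¹) μ :=
    (measurable_id.sub_const x).inv.aestronglyMeasurable
  refine (hm.mul hinv).congr ?_
  filter_upwards [μ.ae_ne x] with y hy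
  simp only [Pi.mul_apply]
  field_simp [sub_ne_zero.2 hy]

/-- The set of `x ≤ a` with `f` measurable on `Iic x` is an initial segment of `Iic a`; past its
supremum `f` agrees with `g`. -/
lemma aestronglyMeasurable_restrict_Iic_of_forall_or {β : Type*} [TopologicalSpace β]
    [TopologicalSpace.PseudoMetrizableSpace β] {f g : ℝ → β} {a : ℝ}
    (hg : AEStronglyMeasurable g (μ.restrict (Iic a)))
    (h : ∀ x ≤ a, AEStronglyMeasurable f (μ.restrict (Iic x)) ∨ f x = g x) :
    AEStronglyMeasurable f (μ.restrict (Iic a)) := by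
  set s := {x | x ≤ a ∧ AEStronglyMeasurable f (μ.restrict (Iic x))}
  have hfg : ∀ x ≤ a, x ∉ s → f x = g x := fun x hx hxs =>
    (h x hx).resolve_left fun hm => hxs ⟨hx, hm⟩
  rcases s.eq_empty_or_nonempty with hs | hs
  · exact hg.congr ((ae_restrict_iff' measurableSet_Iic).2
      (ae_of_all _ fun x hx => (hfg x hx (hs ▸ notMem_empty x)).symm))
  have hbdd : BddAbove s := ⟨a, fun _ hx => hx.1⟩
  set τ := sSup s
  have hτ : τ ≤ a := csSup_le hs fun _ hx => hx.1
  have hbelow : AEStronglyMeasurable f (μ.restrict (Iio τ)) := by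
    have hlt : ∀ n : ℕ, τ - 1 / (n + 1) < τ := fun n => sub_lt_self _ (by positivity)
    rw [← iUnion_Iic_eq_Iio_of_lt_of_tendsto hlt
      (by simpa using tendsto_const_nhds.sub (tendsto_one_div_add_atTop_nhds_zero_nat (𝕜 := ℝ))
        ),
      aestronglyMeasurable_iUnion_iff]
    intro n
    obtain ⟨z, hz, hlt'⟩ := exists_lt_of_lt_csSup hs (hlt n)
    exact hz.2.mono_measure (Measure.restrict_mono (Iic_subset_Iic.2 hlt'.le) le_rfl)
  have habove : AEStronglyMeasurable f (μ.restrict (Icc τ a)) := by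
    rw [← Measure.restrict_congr_set Ioc_ae_eq_Icc]
    refine (hg.mono_measure (Measure.restrict_mono Ioc_subset_Iic_self le_rfl)).congr
      ((ae_restrict_iff' measurableSet_Ioc).2 (ae_of_all _ fun x hx => (hfg x hx.2 fun hxs =>
        (le_csSup hbdd hxs).not_gt hx.1).symm))
  rw [← Iio_union_Icc_eq_Iic hτ]
  exact aestronglyMeasurable_union_iff.2 ⟨hbelow, habove⟩

end Measurability

section BoundedSolutions

variable {V u v : ℝ → ℝ} {a B C c : ℝ}

lemma aestronglyMeasurable_mul_of_eq_one_sub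
    (hV : AEStronglyMeasurable V (volume.restrict (Iic a)))
    (hu : ∀ x ≤ a, u x = 1 - ∫ y in Iic x, (y - x) * (V y * u y)) :
    AEStronglyMeasurable (fun y => V y * u y) (volume.restrict (Iic a)) := by
  refine aestronglyMeasurable_restrict_Iic_of_forall_or hV fun x hx => ?_
  by_cases hint : IntegrableOn (fun y => (y - x) * (V y * u y)) (Iic x)
  · exact .inl (aestronglyMeasurable_of_sub_mul hint.aestronglyMeasurable)
  · -- the junk value `∫ = 0` of a non-integrable function forces `u x = 1`
    right
    rw [hu x hx, integral_undef hint, sub_zero, mul_one]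

variable (hc : 0 < c) (hVb : ∀ y ≤ a, |V y| ≤ C * exp (c * y))
include hc hVb

lemma eq_zero_of_eq_neg_integral {δ : ℝ → ℝ} {D : ℝ}
    (hm : AEStronglyMeasurable (fun y => V y * δ y) (volume.restrict (Iic a)))
    (hδB : ∀ x ≤ a, |δ x| ≤ D) (hδ : ∀ x ≤ a, δ x = -∫ y in Iic x, (y - x) * (V y * δ y))
    {x : ℝ} (hx : x ≤ a) : δ x = 0 := by
  have hbound : ∀ n : ℕ, ∀ x ≤ a,
      |δ x| ≤ D * (4 * C / c ^ 2 * exp (c * x)) ^ n / (n ! : ℝ) ^ 2 := by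
    intro n
    induction n with
    | zero => simpa using hδB
    | succ n ih =>
      intro x hx
      rw [hδ x hx, abs_neg]
      exact abs_integral_le_integral_abs.trans (integral_abs_sub_mul_le_of_iterate_bound hc
        (hm.mono_measure (Measure.restrict_mono (Iic_subset_Iic.2 hx) le_rfl))
        (fun y hy => hVb y (hy.trans hx)) fun y hy => ih y (hy.trans hx)).2
  have hlim : Tendsto (fun n : ℕ => D * (4 * C / c ^ 2 * exp (c * x)) ^ n / (n ! : ℝ) ^ 2)
      atTop (𝓝 0) := by
    simpa only [mul_div_assoc, mul_zero] using
      ((summable_iterate_bound (nonneg_of_abs_le_mul_exp (hVb a le_rfl)) c x).tendsto_atTop_zero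
        ).const_mul D
  exact abs_nonpos_iff.1 (ge_of_tendsto' hlim fun n => hbound n x hx)

variable (hV : AEStronglyMeasurable V (volume.restrict (Iic a)))
include hV

lemma integrableOn_sub_mul_of_eq_one_sub (huB : ∀ x ≤ a, |u x| ≤ B)
    (hu : ∀ x ≤ a, u x = 1 - ∫ y in Iic x, (y - x) * (V y * u y)) {x : ℝ} (hx : x ≤ a) :
    IntegrableOn (fun y => (y - x) * (V y * u y)) (Iic x) :=
  integrableOn_sub_mul hc ((aestronglyMeasurable_mul_of_eq_one_sub hV hu).mono_measure
    (Measure.restrict_mono (Iic_subset_Iic.2 hx) le_rfl))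
    fun y hy => abs_mul_le_mul_exp (hVb y (hy.trans hx)) (huB y (hy.trans hx))

lemma abs_sub_one_le_of_eq_one_sub (huB : ∀ x ≤ a, |u x| ≤ B)
    (hu : ∀ x ≤ a, u x = 1 - ∫ y in Iic x, (y - x) * (V y * u y)) {x : ℝ} (hx : x ≤ a) :
    |u x - 1| ≤ 4 * (C * B) / c ^ 2 * exp (c * x) := by
  rw [hu x hx, sub_sub_cancel_left, abs_neg]
  exact abs_integral_le_integral_abs.trans <| integral_abs_sub_mul_le hc
    ((aestronglyMeasurable_mul_of_eq_one_sub hV hu).mono_measure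
      (Measure.restrict_mono (Iic_subset_Iic.2 hx) le_rfl))
    fun y hy => abs_mul_le_mul_exp (hVb y (hy.trans hx)) (huB y (hy.trans hx))

theorem eq_of_eq_one_sub {B' : ℝ} (huB : ∀ x ≤ a, |u x| ≤ B) (hvB : ∀ x ≤ a, |v x| ≤ B')
    (hu : ∀ x ≤ a, u x = 1 - ∫ y in Iic x, (y - x) * (V y * u y))
    (hv : ∀ x ≤ a, v x = 1 - ∫ y in Iic x, (y - x) * (V y * v y)) {x : ℝ} (hx : x ≤ a) :
    u x = v x := by
  have hm : AEStronglyMeasurable (fun y => V y * (u y - v y)) (volume.restrict (Iic a)) := by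
    refine ((aestronglyMeasurable_mul_of_eq_one_sub hV hu).sub
      (aestronglyMeasurable_mul_of_eq_one_sub hV hv)).congr (ae_of_all _ fun y => ?_)
    exact (mul_sub _ _ _).symm
  refine sub_eq_zero.1 (eq_zero_of_eq_neg_integral hc hVb hm
    (fun x hx => (abs_sub _ _).trans (add_le_add (huB x hx) (hvB x hx))) (fun x hx => ?_) hx)
  rw [hu x hx, hv x hx, sub_sub_sub_cancel_left, ← neg_sub, ← integral_sub
    (integrableOn_sub_mul_of_eq_one_sub hc hVb hV huB hu hx)
    (integrableOn_sub_mul_of_eq_one_sub hc hVb hV hvB hv hx)]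
  simp only [mul_sub]

end BoundedSolutions

theorem exists_bounded_solution {V : ℝ → ℝ} {a C c : ℝ} (hc : 0 < c) (hV : Continuous V)
    (hVb : ∀ y ≤ a, |V y| ≤ C * exp (c * y)) :
    ∃ ψ : ℝ → ℝ, (∀ x ≤ a, deriv (deriv ψ) x = V x * ψ x) ∧ (∃ B, ∀ x ≤ a, |ψ x| ≤ B) ∧
      ∀ x ≤ a, ψ x = 1 - ∫ y in Iic x, (y - x) * (V y * ψ y) := by
  set W := fun y => V (min y a)
  have hW : Continuous W := hV.comp (continuous_id.min continuous_const)
  have hC := nonneg_of_abs_le_mul_exp (hVb a le_rfl)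
  have hWb : ∀ y, |W y| ≤ C * exp (c * y) := fun y =>
    (hVb _ (min_le_right y a)).trans (by gcongr; exact min_le_left y a)
  have hWV : ∀ y ≤ a, W y = V y := fun y hy => by simp only [W, min_eq_left hy]
  refine ⟨neumannSum W, fun x hx => by rw [deriv_deriv_neumannSum hc hW hWb, hWV x hx],
    ⟨_, fun x hx => abs_neumannSum_le hc hW hWb hx⟩, fun x hx => ?_⟩
  have hWV_int : ∫ y in Iic x, (y - x) * (V y * neumannSum W y)
      = ∫ y in Iic x, (y - x) * (W y * neumannSum W y) :=
    setIntegral_congr_fun measurableSet_Iic fun y hy => by rw [hWV y (hy.trans hx)]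
  rw [hWV_int, integral_Iic_sub_mul_neumannSum hc hW hWb, sub_sub_cancel]

end Volterra

open Volterra in
theorem zero_energy_solution_near_horizon_general (M : ℝ) (hM : 0 < M) (a C : ℝ)
    (V : ℝ → ℝ) (hV : Continuous V)
    (hVb : ∀ y ≤ a, |V y| ≤ C * Real.exp (y / (4*M))) :
    ∃ ψ : ℝ → ℝ,
      (∀ x ≤ a, -(deriv (deriv ψ) x) + V x * ψ x = 0) ∧
      (∃ C' > 0, ∀ x ≤ a, |ψ x - 1| ≤ C' * Real.exp (x / (8*M))) ∧
      (∀ x ≤ a, ψ x = 1 - ∫ y in Set.Iic x, (y - x) * V y * ψ y) ∧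
      (∀ ψ' : ℝ → ℝ, (∃ B, ∀ x ≤ a, |ψ' x| ≤ B) →
        (∀ x ≤ a, ψ' x = 1 - ∫ y in Set.Iic x, (y - x) * V y * ψ' y) →
        ∀ x ≤ a, ψ' x = ψ x) := by
  set c := (4 * M)⁻¹
  have hc : 0 < c := by positivity
  have hVb' : ∀ y ≤ a, |V y| ≤ C * exp (c * y) := fun y hy => by
    simpa only [div_eq_inv_mul] using hVb y hy
  simp_rw [mul_assoc (_ - _)]
  obtain ⟨ψ, hψ'', ⟨B, hB⟩, hψ⟩ := exists_bounded_solution hc hV hVb'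
  have hVm := hV.aestronglyMeasurable (μ := volume.restrict (Iic a))
  refine ⟨ψ, fun x hx => by rw [hψ'' x hx]; ring, ?_, hψ,
    fun ψ' ⟨B', hB'⟩ hψ' x hx => eq_of_eq_one_sub hc hVb' hVm hB' hB hψ' hψ hx⟩
  set K := 4 * (C * B) / c ^ 2
  refine ⟨max K 1 * exp (c / 2 * a), by positivity, fun x hx => ?_⟩
  have hexp : exp (c * x) ≤ exp (c / 2 * a) * exp (x / (8 * M)) := by
    rw [← exp_add, show x / (8 * M) = c / 2 * x by simp only [c]; field_simp; ring]
    gcongr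
    nlinarith
  calc |ψ x - 1| ≤ K * exp (c * x) := abs_sub_one_le_of_eq_one_sub hc hVb' hVm hB hψ hx
    _ ≤ max K 1 * (exp (c / 2 * a) * exp (x / (8 * M))) :=
      mul_le_mul (le_max_left K 1) hexp (exp_pos _).le (by positivity)
    _ = max K 1 * exp (c / 2 * a) * exp (x / (8 * M)) := by ring

/-- Construction of the zero-energy solution near `-∞`: if `|V(y)| ≤ C e^{y/(4M)}` for
`y ≤ a`, there is a solution `ψ₁` of `-ψ'' + Vψ = 0` on `(-∞, a]` with
`|ψ₁(x) - 1| ≤ C' e^{x/(8M)}`, obtained as the unique bounded solution of the Volterra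
equation `ψ₁(x) = 1 - ∫_{-∞}^x (y - x) V(y) ψ₁(y) dy`. -/
theorem zero_energy_solution_near_horizon (M : ℝ) (hM : 0 < M) (a C : ℝ) (hC : 0 < C)
    (V : ℝ → ℝ) (hV : Continuous V)
    (hVb : ∀ y ≤ a, |V y| ≤ C * Real.exp (y / (4*M))) :
    ∃ ψ : ℝ → ℝ,
      (∀ x ≤ a, -(deriv (deriv ψ) x) + V x * ψ x = 0) ∧
      (∃ C' > 0, ∀ x ≤ a, |ψ x - 1| ≤ C' * Real.exp (x / (8*M))) ∧
      (∀ x ≤ a, ψ x = 1 - ∫ y in Set.Iic x, (y - x) * V y * ψ y) ∧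
      (∀ ψ' : ℝ → ℝ, (∃ B, ∀ x ≤ a, |ψ' x| ≤ B) →
        (∀ x ≤ a, ψ' x = 1 - ∫ y in Set.Iic x, (y - x) * V y * ψ' y) →
        ∀ x ≤ a, ψ' x = ψ x) :=
  zero_energy_solution_near_horizon_general M hM a C V hV hVb
end

section
/- Let $f:(0,s)\to\mathbb{R}$ be smooth, let $k\geq 1$, and suppose $f(0^+):=\lim_{x\to 0^+}f(x) = 0$, all derivatives $f^{(l)}$ for $l \leq 2k$ are bounded on $(0,s)$, $\lim_{x\to 0^+}f^{(2l-1)}(x) = 0$ for $1\leq l \leq k$, and $|f^{(2k+l)}(x)| \leq C_l x^{-l}$ for all $l \geq 0$. Then the function $g(x) := f(x)/x$ satisfies: $g$ extends smoothly with $g(x) = \int_0^1 f'(\theta x)\,d\theta$, all derivatives $g^{(l)}$ for $l \leq 2k-1$ are bounded on $(0,s)$, $\lim_{x\to 0^+} g^{(2l)}(x)$ exists for $0\leq l\leq k-1$ with $g^{(2l)}(0^+) = f^{(2l+1)}(0^+)/(2l+1) = 0$ for $1 \leq l \leq k-1$, and $|g^{(2k-1+l)}(x)| \leq C'_l x^{-l}$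 for all $l\geq 0$. -/
/-- Membership in the class `O_{2k}(1)` of the paper: `f` is smooth on `(0,s)`, its
derivatives of order `≤ 2k` are bounded, its odd derivatives of order `2i-1` (for
`1 ≤ i ≤ k`) tend to `0` at `0⁺`, and derivatives of order `2k + j` satisfy symbol-type
bounds `|f^{(2k+j)}(x)| ≤ C_j x^{-j}`. -/
def OBound (k : ℕ) (s : ℝ) (f : ℝ → ℝ) : Prop :=
  ContDiffOn ℝ (⊤ : ℕ∞) f (Set.Ioo 0 s) ∧
  (∀ j ≤ 2*k, ∃ C, ∀ x ∈ Set.Ioo 0 s, |iteratedDeriv j f x| ≤ C) ∧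
  (∀ i, 1 ≤ i → i ≤ k →
    Filter.Tendsto (iteratedDeriv (2*i - 1) f) (nhdsWithin 0 (Set.Ioi 0)) (nhds 0)) ∧
  (∀ j : ℕ, ∃ C, ∀ x ∈ Set.Ioo 0 s, |iteratedDeriv (2*k + j) f x| ≤ C * x ^ (-(j:ℝ)))

section Helpers
open Set Filter MeasureTheory intervalIntegral Topology

lemma master_bound {k : ℕ} {s : ℝ} {f : ℝ → ℝ} (hk : 1 ≤ k) (hf : OBound k s f) (n : ℕ) :
    ∃ M, 0 ≤ M ∧ ∀ t ∈ Set.Ioo 0 s,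
      |t ^ n * iteratedDeriv (n+1) f t| ≤ M * t ^ (min (n+1) (2*k) - 1) := by
  rcases le_or_gt (n+1) (2*k) with h | h
  · obtain ⟨C, hC⟩ := hf.2.1 (n+1) h
    refine ⟨max C 0, le_max_right _ _, fun t ht => ?_⟩
    have he : min (n+1) (2*k) - 1 = n := by omega
    rw [he, abs_mul, abs_pow, abs_of_pos ht.1, mul_comm (max C 0)]
    exact mul_le_mul_of_nonneg_left ((hC t ht).trans (le_max_left _ _))
      (pow_nonneg ht.1.le n)
  · obtain ⟨C, hC⟩ := hf.2.2.2 (n+1-2*k)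
    refine ⟨max C 0, le_max_right _ _, fun t ht => ?_⟩
    have hidx : 2*k + (n+1-2*k) = n+1 := by omega
    have hC' := hC t ht
    rw [hidx, Real.rpow_neg ht.1.le, Real.rpow_natCast] at hC'
    have he : min (n+1) (2*k) - 1 = 2*k - 1 := by omega
    have hpow : t ^ n = t ^ (2*k-1) * t ^ (n+1-2*k) := by
      rw [← pow_add]; congr 1; omega
    have htj : (0:ℝ) < t ^ (n+1-2*k) := pow_pos ht.1 _
    rw [he, abs_mul, abs_pow, abs_of_pos ht.1]
    calc t ^ n * |iteratedDeriv (n+1) f t|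
        ≤ t ^ n * (max C 0 * (t ^ (n+1-2*k))⁻¹) := by
          refine mul_le_mul_of_nonneg_left (hC'.trans ?_) (pow_nonneg ht.1.le n)
          exact mul_le_mul_of_nonneg_right (le_max_left _ _) (inv_nonneg.2 htj.le)
      _ = max C 0 * t ^ (2*k-1) := by rw [hpow]; field_simp


lemma eqOn_iterDW {f : ℝ → ℝ} {U : Set ℝ} (hU : IsOpen U) (n : ℕ) :
    Set.EqOn (iteratedDerivWithin n f U) (iteratedDeriv n f) U := fun x hx => by
  rw [iteratedDerivWithin_eq_iteratedFDerivWithin, iteratedDeriv_eq_iteratedFDeriv,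
    iteratedFDerivWithin_of_isOpen n hU hx]

lemma hasDerivAt_iterD {f : ℝ → ℝ} {U : Set ℝ} (hU : IsOpen U) (hf : ContDiffOn ℝ (⊤ : ℕ∞) f U)
    (n : ℕ) {x : ℝ} (hx : x ∈ U) :
    HasDerivAt (iteratedDeriv n f) (iteratedDeriv (n + 1) f x) x := by
  have h1 : DifferentiableWithinAt ℝ (iteratedDerivWithin n f U) U x :=
    hf.differentiableOn_iteratedDerivWithin (by exact_mod_cast WithTop.coe_lt_top _) hU.uniqueDiffOn x hx
  have h2 : DifferentiableAt ℝ (iteratedDerivWithin n f U) x :=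
    h1.differentiableAt (hU.mem_nhds hx)
  have heq : iteratedDeriv n f =ᶠ[𝓝 x] iteratedDerivWithin n f U := by
    filter_upwards [hU.mem_nhds hx] with y hy
    exact (eqOn_iterDW hU n hy).symm
  have h3 : DifferentiableAt ℝ (iteratedDeriv n f) x := h2.congr_of_eventuallyEq heq
  have h4 := h3.hasDerivAt
  rwa [show iteratedDeriv (n+1) f x = deriv (iteratedDeriv n f) x from congrFun (iteratedDeriv_succ) x]

lemma intInt_of_bdd {v : ℝ → ℝ} {s x M : ℝ} (hx : x ∈ Ioo 0 s)
    (hcont : ContinuousOn v (Ioo 0 s)) (hbound : ∀ t ∈ Ioo 0 s, |v t| ≤ M) :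
    IntervalIntegrable v volume 0 x := by
  have hsub : Ioc 0 x ⊆ Ioo 0 s := fun t ht => ⟨ht.1, lt_of_le_of_lt ht.2 hx.2⟩
  rw [intervalIntegrable_iff_integrableOn_Ioc_of_le hx.1.le]
  refine Integrable.mono' (g := fun _ => M)
    (integrableOn_const measure_Ioc_lt_top.ne)
    ((hcont.mono hsub).aestronglyMeasurable measurableSet_Ioc) ?_
  exact ae_restrict_of_forall_mem measurableSet_Ioc fun t ht => hbound t (hsub ht)

lemma ftc_from_zero {s : ℝ} {u v : ℝ → ℝ} {M : ℝ}
    (hderiv : ∀ t ∈ Ioo 0 s, HasDerivAt u (v t) t)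
    (hcont : ContinuousOn v (Ioo 0 s))
    (hbound : ∀ t ∈ Ioo 0 s, |v t| ≤ M)
    (hu0 : Tendsto u (nhdsWithin 0 (Ioi 0)) (nhds 0))
    {x : ℝ} (hx : x ∈ Ioo 0 s) :
    u x = ∫ t in (0:ℝ)..x, v t := by
  have hM : 0 ≤ M := le_trans (abs_nonneg _) (hbound x hx)
  have hint : IntervalIntegrable v volume 0 x := intInt_of_bdd hx hcont hbound
  have hIoo : Ioo (0:ℝ) x ∈ 𝓝[>] (0:ℝ) := Ioo_mem_nhdsGT_of_mem ⟨le_refl 0, hx.1⟩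
  have hintsub : ∀ a ∈ Ioo (0:ℝ) x, IntervalIntegrable v volume 0 a := by
    intro a ha
    refine hint.mono_set ?_
    rw [uIcc_of_le ha.1.le, uIcc_of_le hx.1.le]
    exact Icc_subset_Icc le_rfl ha.2.le
  have hsub : ∀ a ∈ Ioo (0:ℝ) x, u x - u a = ∫ t in a..x, v t := by
    intro a ha
    refine (intervalIntegral.integral_eq_sub_of_hasDerivAt ?_ ?_).symm
    · intro t ht
      rw [uIcc_of_le ha.2.le] at ht
      exact hderiv t ⟨lt_of_lt_of_le ha.1 ht.1, lt_of_le_of_lt ht.2 hx.2⟩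
    · refine hint.mono_set ?_
      rw [uIcc_of_le ha.2.le, uIcc_of_le hx.1.le]
      exact Icc_subset_Icc ha.1.le le_rfl
  -- small integral tends to 0
  have h1 : Tendsto (fun a => ∫ t in (0:ℝ)..a, v t) (𝓝[>] (0:ℝ)) (𝓝 0) := by
    have hb : ∀ᶠ a in 𝓝[>] (0:ℝ), ‖∫ t in (0:ℝ)..a, v t‖ ≤ M * a := by
      filter_upwards [hIoo] with a ha
      have := intervalIntegral.norm_integral_le_of_norm_le_const (C := M) (f := v)
        (a := (0:ℝ)) (b := a) ?_
      · simpa [abs_of_pos ha.1, mul_comm] using this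
      · intro t ht
        rw [uIoc_of_le ha.1.le] at ht
        exact hbound t ⟨ht.1, lt_trans (lt_of_le_of_lt ht.2 ha.2) hx.2⟩
    have h2 : Tendsto (fun a : ℝ => M * a) (𝓝[>] (0:ℝ)) (𝓝 0) := by
      have hc : Continuous (fun a : ℝ => M * a) := continuous_const.mul continuous_id
      have := (hc.tendsto (0:ℝ)).mono_left (nhdsWithin_le_nhds (s := Ioi (0:ℝ)))
      simpa using this
    exact squeeze_zero_norm' hb h2
  have h2 : Tendsto (fun a => u a + ((∫ t in (0:ℝ)..x, v t) - ∫ t in (0:ℝ)..a, v t))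
      (𝓝[>] (0:ℝ)) (𝓝 (0 + ((∫ t in (0:ℝ)..x, v t) - 0))) :=
    hu0.add (tendsto_const_nhds.sub h1)
  have h3 : ∀ᶠ a in 𝓝[>] (0:ℝ),
      u a + ((∫ t in (0:ℝ)..x, v t) - ∫ t in (0:ℝ)..a, v t) = u x := by
    filter_upwards [hIoo] with a ha
    have e1 : (∫ t in (0:ℝ)..x, v t) - ∫ t in (0:ℝ)..a, v t = ∫ t in a..x, v t :=
      intervalIntegral.integral_interval_sub_left hint (hintsub a ha)
    have e2 := hsub a ha
    rw [e1]; linarith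
  have h4 : Tendsto (fun _ : ℝ => u x) (𝓝[>] (0:ℝ))
      (𝓝 (0 + ((∫ t in (0:ℝ)..x, v t) - 0))) := h2.congr' h3
  have := tendsto_nhds_unique h4 tendsto_const_nhds
  rw [← this]; ring

lemma key_lemma {k : ℕ} {s : ℝ} {f : ℝ → ℝ} (hs : 0 < s) (hk : 1 ≤ k) (hf : OBound k s f)
    (hf0 : Filter.Tendsto f (nhdsWithin 0 (Set.Ioi 0)) (nhds 0)) (n : ℕ) :
    ∀ x ∈ Set.Ioo 0 s, x ^ (n+1) * iteratedDeriv n (fun y => f y / y) x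
      = ∫ t in (0:ℝ)..x, t ^ n * iteratedDeriv (n+1) f t := by
  set g : ℝ → ℝ := fun y => f y / y with hg
  have hUopen : IsOpen (Ioo (0:ℝ) s) := isOpen_Ioo
  have hgsm : ContDiffOn ℝ (⊤ : ℕ∞) g (Ioo 0 s) :=
    hf.1.div contDiffOn_id (fun x hx => ne_of_gt hx.1)
  have hFd : ∀ m, ∀ x ∈ Ioo (0:ℝ) s,
      HasDerivAt (iteratedDeriv m f) (iteratedDeriv (m+1) f x) x :=
    fun m x hx => hasDerivAt_iterD hUopen hf.1 m hx
  have hGd : ∀ m, ∀ x ∈ Ioo (0:ℝ) s,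
      HasDerivAt (iteratedDeriv m g) (iteratedDeriv (m+1) g x) x :=
    fun m x hx => hasDerivAt_iterD hUopen hgsm m hx
  have hFc : ∀ m, ContinuousOn (iteratedDeriv m f) (Ioo 0 s) :=
    fun m x hx => ((hFd m x hx).continuousAt).continuousWithinAt
  -- the integrand and its properties
  set v : ℕ → ℝ → ℝ := fun m t => t ^ m * iteratedDeriv (m+1) f t with hv
  have hvc : ∀ m, ContinuousOn (v m) (Ioo 0 s) :=
    fun m => (continuous_pow m).continuousOn.mul (hFc (m+1))
  have hvb : ∀ m, ∃ M, 0 ≤ M ∧ ∀ t ∈ Ioo (0:ℝ) s, |v m t| ≤ M := by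
    intro m
    obtain ⟨M, hM0, hM⟩ := master_bound hk hf m
    refine ⟨M * s ^ (min (m+1) (2*k) - 1), by positivity, fun t ht => ?_⟩
    exact (hM t ht).trans (mul_le_mul_of_nonneg_left
      (pow_le_pow_left₀ ht.1.le ht.2.le _) hM0)
  have hvint : ∀ m, ∀ x ∈ Ioo (0:ℝ) s, IntervalIntegrable (v m) volume 0 x := by
    intro m x hx
    obtain ⟨M, _, hM⟩ := hvb m
    exact intInt_of_bdd hx (hvc m) hM
  induction n with
  | zero =>
    intro x hx
    have h1 : f x = ∫ t in (0:ℝ)..x, v 0 t := by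
      obtain ⟨M, _, hM⟩ := hvb 0
      refine ftc_from_zero (fun t ht => ?_) (hvc 0) hM hf0 hx
      simpa [hv] using hFd 0 t ht
    have h2 : x ^ 1 * iteratedDeriv 0 g x = f x := by
      simp only [iteratedDeriv_zero, pow_one, hg]
      rw [mul_comm]
      exact div_mul_cancel₀ _ (ne_of_gt hx.1)
    rw [h2, h1]
  | succ n ih =>
    intro x hx
    -- Step 1: differentiate both sides of ih to get the relation R
    have hR : (↑(n+1) * x ^ n) * iteratedDeriv n g x + x ^ (n+1) * iteratedDeriv (n+1) g x
        = v n x := by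
      have hΦ : HasDerivAt (fun y => y ^ (n+1) * iteratedDeriv n g y)
          ((↑(n+1) * x ^ n) * iteratedDeriv n g x + x ^ (n+1) * iteratedDeriv (n+1) g x) x := by
        have := (hasDerivAt_pow (n+1) x).mul (hGd n x hx)
        simpa [Pi.mul_def] using this
      have hΨ : HasDerivAt (fun y => ∫ t in (0:ℝ)..y, v n t) (v n x) x :=
        intervalIntegral.integral_hasDerivAt_right (hvint n x hx)
          (ContinuousOn.stronglyMeasurableAtFilter hUopen (hvc n) x hx)
          ((hvc n).continuousAt (hUopen.mem_nhds hx))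
      have heq : (fun y => y ^ (n+1) * iteratedDeriv n g y)
          =ᶠ[nhds x] (fun y => ∫ t in (0:ℝ)..y, v n t) := by
        filter_upwards [hUopen.mem_nhds hx] with y hy
        exact ih y hy
      exact hΦ.unique (hΨ.congr_of_eventuallyEq heq)
    -- Step 2: integration by parts identity
    have hIBP : x ^ (n+1) * iteratedDeriv (n+1) f x
        = ∫ t in (0:ℝ)..x, ((↑(n+1) * t ^ n) * iteratedDeriv (n+1) f t + v (n+1) t) := by
      obtain ⟨M1, hM10, hM1⟩ := hvb n
      obtain ⟨M2, hM20, hM2⟩ := hvb (n+1)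
      refine ftc_from_zero (u := fun y => y ^ (n+1) * iteratedDeriv (n+1) f y)
        (M := ((n:ℝ)+1) * M1 + M2) (fun t ht => ?_) ?_ (fun t ht => ?_) ?_ hx
      · have := (hasDerivAt_pow (n+1) t).mul (hFd (n+1) t ht)
        simpa only [Nat.add_sub_cancel, Pi.mul_def] using this
      · exact ((continuous_const.mul (continuous_pow n)).continuousOn.mul (hFc (n+1))).add
          (hvc (n+1))
      · calc |(↑(n+1):ℝ) * t ^ n * iteratedDeriv (n+1) f t + v (n+1) t|
            ≤ |(↑(n+1):ℝ) * t ^ n * iteratedDeriv (n+1) f t| + |v (n+1) t| := abs_add_le _ _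
          _ ≤ (↑(n+1):ℝ) * M1 + M2 := by
              refine add_le_add ?_ (hM2 t ht)
              rw [mul_assoc, abs_mul, Nat.abs_cast]
              exact mul_le_mul_of_nonneg_left (hM1 t ht) (by positivity)
          _ = ((n:ℝ)+1) * M1 + M2 := by push_cast; ring
      · -- u tends to 0 at 0⁺
        have hIoo : Ioo (0:ℝ) s ∈ nhdsWithin (0:ℝ) (Ioi 0) :=
          Ioo_mem_nhdsGT_of_mem ⟨le_refl 0, hs⟩
        obtain ⟨M, hM0, hM⟩ := hvb n
        have hb : ∀ᶠ t in nhdsWithin (0:ℝ) (Ioi 0),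
            ‖t ^ (n+1) * iteratedDeriv (n+1) f t‖ ≤ M * t := by
          filter_upwards [hIoo] with t ht
          have e : t ^ (n+1) * iteratedDeriv (n+1) f t
              = t * (t ^ n * iteratedDeriv (n+1) f t) := by rw [pow_succ]; ring
          rw [Real.norm_eq_abs, e, abs_mul, abs_of_pos ht.1]
          calc t * |t ^ n * iteratedDeriv (n+1) f t| ≤ t * M :=
                mul_le_mul_of_nonneg_left (hM t ht) ht.1.le
            _ = M * t := mul_comm _ _
        have h2 : Tendsto (fun t : ℝ => M * t) (nhdsWithin (0:ℝ) (Ioi 0)) (nhds 0) := by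
          have hc : Continuous (fun t : ℝ => M * t) := continuous_const.mul continuous_id
          have := (hc.tendsto (0:ℝ)).mono_left (nhdsWithin_le_nhds (s := Ioi (0:ℝ)))
          simpa using this
        exact squeeze_zero_norm' hb h2
    -- Step 3: split the integral
    have hsplit : (∫ t in (0:ℝ)..x, ((↑(n+1) * t ^ n) * iteratedDeriv (n+1) f t + v (n+1) t))
        = (↑(n+1):ℝ) * (∫ t in (0:ℝ)..x, v n t) + ∫ t in (0:ℝ)..x, v (n+1) t := by
      have e : (fun t => (↑(n+1):ℝ) * t ^ n * iteratedDeriv (n+1) f t + v (n+1) t)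
          = fun t => (↑(n+1):ℝ) * v n t + v (n+1) t := by
        funext t; rw [mul_assoc]
      rw [e, intervalIntegral.integral_add ((hvint n x hx).const_mul _)
        (hvint (n+1) x hx), intervalIntegral.integral_const_mul]
    -- Step 4: combine
    have hihx := ih x hx
    rw [hsplit, ← hihx] at hIBP
    have hvnx : v n x = x ^ n * iteratedDeriv (n+1) f x := rfl
    rw [hvnx] at hR
    show x ^ (n+1+1) * iteratedDeriv (n+1) g x = ∫ t in (0:ℝ)..x, v (n+1) t
    push_cast at hR hIBP
    linear_combination x * hR + hIBP

end Helpers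

open Set Filter MeasureTheory intervalIntegral Topology in
/-- Proposition 8.11(1) of the paper: if `f ∈ O⁰_{2k}(1)` (i.e. `f ∈ O_{2k}(1)` with
`f(0⁺) = 0`), then `g = f/x ∈ O_{2k-1}(x)`: `g(x) = ∫₀¹ f'(θx) dθ`, the derivatives of
`g` of order `≤ 2k - 1` are bounded, even derivatives `g^{(2i)}` have limits at `0⁺`
equal to `f^{(2i+1)}(0⁺)/(2i+1) = 0` for `1 ≤ i ≤ k-1`, and higher derivatives satisfy
symbol-type bounds. -/
theorem O_class_div_x (s : ℝ) (hs : 0 < s) (k : ℕ) (hk : 1 ≤ k)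
    (f : ℝ → ℝ) (hf : OBound k s f)
    (hf0 : Filter.Tendsto f (nhdsWithin 0 (Set.Ioi 0)) (nhds 0)) :
    let g : ℝ → ℝ := fun x => f x / x
    (∀ x ∈ Set.Ioo 0 s, g x = ∫ θ in (0:ℝ)..1, deriv f (θ * x)) ∧
    (∀ j ≤ 2*k - 1, ∃ C, ∀ x ∈ Set.Ioo 0 s, |iteratedDeriv j g x| ≤ C) ∧
    (∀ i ≤ k - 1, ∃ c, Filter.Tendsto (iteratedDeriv (2*i) g)
        (nhdsWithin 0 (Set.Ioi 0)) (nhds c) ∧ (1 ≤ i → c = 0)) ∧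
    (∀ j : ℕ, ∃ C, ∀ x ∈ Set.Ioo 0 s,
      |iteratedDeriv (2*k - 1 + j) g x| ≤ C * x ^ (-(j:ℝ))) := by
  intro g
  have key : ∀ n : ℕ, ∀ x ∈ Set.Ioo 0 s, x ^ (n+1) * iteratedDeriv n g x
      = ∫ t in (0:ℝ)..x, t ^ n * iteratedDeriv (n+1) f t :=
    fun n => key_lemma hs hk hf hf0 n
  refine ⟨?_, ?_, ?_, ?_⟩
  · -- part 1
    intro x hx
    have hk0 := key 0 x hx
    simp only [Nat.zero_add, pow_one, iteratedDeriv_zero, pow_zero, one_mul, iteratedDeriv_one] at hk0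
    have e1 : (∫ θ in (0:ℝ)..1, deriv f (θ * x))
        = x⁻¹ • ∫ t in (0:ℝ)*x..(1:ℝ)*x, deriv f t :=
      intervalIntegral.integral_comp_mul_right (fun t => deriv f t) (ne_of_gt hx.1)
    rw [e1, zero_mul, one_mul, smul_eq_mul, ← hk0]
    show g x = x⁻¹ * (x * g x)
    rw [inv_mul_cancel_left₀ (ne_of_gt hx.1)]
  · -- part 2: boundedness of low derivatives
    intro j hj
    obtain ⟨M, hM0, hM⟩ := master_bound hk hf j
    have he : min (j+1) (2*k) - 1 = j := by omega
    rw [he] at hM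
    refine ⟨M, fun x hx => ?_⟩
    have hxp : (0:ℝ) < x ^ (j+1) := pow_pos hx.1 _
    have hb : |x ^ (j+1) * iteratedDeriv j g x| ≤ M * x ^ (j+1) := by
      rw [key j x hx]
      calc |∫ t in (0:ℝ)..x, t ^ j * iteratedDeriv (j+1) f t|
          = ‖∫ t in (0:ℝ)..x, t ^ j * iteratedDeriv (j+1) f t‖ := (Real.norm_eq_abs _).symm
        _ ≤ (M * x ^ j) * |x - 0| := by
            refine intervalIntegral.norm_integral_le_of_norm_le_const fun t ht => ?_
            rw [uIoc_of_le hx.1.le] at ht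
            have ht' : t ∈ Set.Ioo 0 s := ⟨ht.1, lt_of_le_of_lt ht.2 hx.2⟩
            refine (hM t ht').trans ?_
            exact mul_le_mul_of_nonneg_left (pow_le_pow_left₀ ht.1.le ht.2 j) hM0
        _ = M * x ^ (j+1) := by
            rw [sub_zero, abs_of_pos hx.1, pow_succ]; ring
    rw [abs_mul, abs_of_pos hxp, mul_comm M] at hb
    exact le_of_mul_le_mul_left hb hxp
  · -- part 3: limits of even derivatives
    intro i hi
    refine ⟨0, ?_, fun _ => rfl⟩
    have hodd := hf.2.2.1 (i+1) (by omega) (by omega)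
    have hidx : 2*(i+1) - 1 = 2*i + 1 := by omega
    rw [hidx] at hodd
    rw [Metric.tendsto_nhdsWithin_nhds] at hodd ⊢
    intro ε hε
    obtain ⟨δ, hδ, hδ'⟩ := hodd (ε/2) (by positivity)
    refine ⟨min δ s, lt_min hδ hs, fun {x} hx hxd => ?_⟩
    rw [Real.dist_eq, sub_zero, abs_of_pos hx] at hxd
    have hxs : x ∈ Set.Ioo 0 s := ⟨hx, lt_of_lt_of_le hxd (min_le_right _ _)⟩
    have hxδ : x < δ := lt_of_lt_of_le hxd (min_le_left _ _)
    have hxp : (0:ℝ) < x ^ (2*i+1) := pow_pos hx _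
    have hb : |x ^ (2*i+1) * iteratedDeriv (2*i) g x| ≤ (ε/2) * x ^ (2*i+1) := by
      rw [key (2*i) x hxs]
      calc |∫ t in (0:ℝ)..x, t ^ (2*i) * iteratedDeriv (2*i+1) f t|
          = ‖∫ t in (0:ℝ)..x, t ^ (2*i) * iteratedDeriv (2*i+1) f t‖ := (Real.norm_eq_abs _).symm
        _ ≤ (x ^ (2*i) * (ε/2)) * |x - 0| := by
            refine intervalIntegral.norm_integral_le_of_norm_le_const fun t ht => ?_
            rw [uIoc_of_le hx.le] at ht
            have hdt : dist (iteratedDeriv (2*i+1) f t) 0 < ε/2 :=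
              hδ' (ht.1 : t ∈ Set.Ioi (0:ℝ)) (by
                rw [Real.dist_eq, sub_zero, abs_of_pos ht.1]
                exact lt_of_le_of_lt ht.2 hxδ)
            rw [Real.dist_eq, sub_zero] at hdt
            rw [Real.norm_eq_abs, abs_mul, abs_pow, abs_of_pos ht.1]
            exact mul_le_mul (pow_le_pow_left₀ ht.1.le ht.2 _) hdt.le (abs_nonneg _)
              (pow_nonneg hx.le _)
        _ = (ε/2) * x ^ (2*i+1) := by
            rw [sub_zero, abs_of_pos hx, pow_succ]; ring
    rw [abs_mul, abs_of_pos hxp, mul_comm (ε/2)] at hb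
    have := le_of_mul_le_mul_left hb hxp
    rw [Real.dist_eq, sub_zero]
    linarith
  · -- part 4: symbol bounds for high derivatives
    intro j
    set n := 2*k - 1 + j with hn
    have hn1 : n + 1 = 2*k + j := by omega
    obtain ⟨M, hM0, hM⟩ := master_bound hk hf n
    have he : min (n+1) (2*k) - 1 = 2*k - 1 := by omega
    rw [he] at hM
    refine ⟨M, fun x hx => ?_⟩
    have hxp : (0:ℝ) < x ^ (n+1) := pow_pos hx.1 _
    have hb : |x ^ (n+1) * iteratedDeriv n g x| ≤ M * x ^ (2*k) := by
      rw [key n x hx]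
      calc |∫ t in (0:ℝ)..x, t ^ n * iteratedDeriv (n+1) f t|
          = ‖∫ t in (0:ℝ)..x, t ^ n * iteratedDeriv (n+1) f t‖ := (Real.norm_eq_abs _).symm
        _ ≤ (M * x ^ (2*k - 1)) * |x - 0| := by
            refine intervalIntegral.norm_integral_le_of_norm_le_const fun t ht => ?_
            rw [uIoc_of_le hx.1.le] at ht
            have ht' : t ∈ Set.Ioo 0 s := ⟨ht.1, lt_of_le_of_lt ht.2 hx.2⟩
            refine (hM t ht').trans ?_
            exact mul_le_mul_of_nonneg_left (pow_le_pow_left₀ ht.1.le ht.2 _) hM0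
        _ = M * x ^ (2*k) := by
            rw [sub_zero, abs_of_pos hx.1, mul_assoc, ← pow_succ]
            congr 2
            omega
    have hxj : (x:ℝ) ^ j ≠ 0 := (pow_pos hx.1 j).ne'
    have hr : (M * x ^ (-(j:ℝ))) * x ^ (n+1) = M * x ^ (2*k) := by
      rw [Real.rpow_neg hx.1.le, Real.rpow_natCast, hn1, pow_add]
      field_simp
    rw [← hr, abs_mul, abs_of_pos hxp, mul_comm (M * x ^ (-(j:ℝ)))] at hb
    exact le_of_mul_le_mul_left hb hxp
end

section
/- Let $k \geq l \geq 0$ be integers and $f, g: (0,s)\to\mathbb{R}$ smooth functions such that: all derivatives $f^{(j)}$, $j \leq 2k$, are bounded with $\lim_{x\to0^+}f^{(2i-1)}(x) = 0$ for $1\leq i\leq k$ and $|f^{(2k+j)}(x)|\leq C_j x^{-j}$ for $j\geq 0$; and similarly for $g$ with $k$ replaced by $l$. Then the product $fg$ satisfies the same conditions with parameter $l$: all derivatives $(fg)^{(j)}$, $j\leq 2l$, are bounded, $\lim_{x\to0^+}(fg)^{(2i-1)}(x) = 0$ for $1 \leq i \leq l$, and $|(fg)^{(2l+j)}(x)| \leq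 C'_j x^{-j}$ for $j \geq 0$. -/
open Set Finset Filter

open Set Finset Filter

private lemma leib_aux {s : ℝ} {f g : ℝ → ℝ} (hf : ContDiffOn ℝ (⊤ : ℕ∞) f (Set.Ioo 0 s))
    (hg : ContDiffOn ℝ (⊤ : ℕ∞) g (Set.Ioo 0 s)) (n : ℕ) {x : ℝ} (hx : x ∈ Set.Ioo 0 s) :
    |iteratedDeriv n (fun x => f x * g x) x| ≤
      ∑ i ∈ Finset.range (n+1), (n.choose i : ℝ) *
        |iteratedDeriv i f x| * |iteratedDeriv (n-i) g x| := by
  have h := norm_iteratedFDerivWithin_mul_le hf hg (uniqueDiffOn_Ioo 0 s) hx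
    (n := n) (by exact_mod_cast (le_top : (n : ℕ∞) ≤ ⊤))
  simp only [iteratedFDerivWithin_of_isOpen _ isOpen_Ioo hx,
    norm_iteratedFDeriv_eq_norm_iteratedDeriv, Real.norm_eq_abs] at h
  exact h


/-- Proposition 8.11(3). -/
theorem O_class_mul (s : ℝ) (hs : 0 < s) (k l : ℕ) (hkl : l ≤ k)
    (f g : ℝ → ℝ) (hf : OBound k s f) (hg : OBound l s g) :
    OBound l s (fun x => f x * g x) := by
  obtain ⟨hf1, hf2, hf3, hf4⟩ := hf
  obtain ⟨hg1, hg2, hg3, hg4⟩ := hg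
  have key : ∀ n : ℕ, ∃ C, ∀ x ∈ Set.Ioo 0 s,
      |iteratedDeriv n (fun x => f x * g x) x| ≤ C * x ^ (-((n - 2*l : ℕ) : ℝ)) := by
    have Hf : ∀ n : ℕ, ∃ C, 0 ≤ C ∧ ∀ x ∈ Set.Ioo 0 s,
        |iteratedDeriv n f x| ≤ C * x ^ (-((n - 2*k : ℕ) : ℝ)) := by
      intro n
      rcases le_or_gt n (2*k) with h | h
      · obtain ⟨C, hC⟩ := hf2 n h
        refine ⟨max C 0, le_max_right _ _, fun x hx => ?_⟩
        have h0 : (n - 2*k : ℕ) = 0 := by omega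
        rw [h0]
        simp only [Nat.cast_zero, neg_zero, Real.rpow_zero, mul_one]
        exact (hC x hx).trans (le_max_left _ _)
      · obtain ⟨C, hC⟩ := hf4 (n - 2*k)
        refine ⟨max C 0, le_max_right _ _, fun x hx => ?_⟩
        have h2 : 2*k + (n - 2*k) = n := by omega
        have h3 := hC x hx
        rw [h2] at h3
        exact h3.trans (mul_le_mul_of_nonneg_right (le_max_left _ _)
          (Real.rpow_nonneg hx.1.le _))
    have Hg : ∀ n : ℕ, ∃ C, 0 ≤ C ∧ ∀ x ∈ Set.Ioo 0 s,
        |iteratedDeriv n g x| ≤ C * x ^ (-((n - 2*l : ℕ) : ℝ)) := by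
      intro n
      rcases le_or_gt n (2*l) with h | h
      · obtain ⟨C, hC⟩ := hg2 n h
        refine ⟨max C 0, le_max_right _ _, fun x hx => ?_⟩
        have h0 : (n - 2*l : ℕ) = 0 := by omega
        rw [h0]
        simp only [Nat.cast_zero, neg_zero, Real.rpow_zero, mul_one]
        exact (hC x hx).trans (le_max_left _ _)
      · obtain ⟨C, hC⟩ := hg4 (n - 2*l)
        refine ⟨max C 0, le_max_right _ _, fun x hx => ?_⟩
        have h2 : 2*l + (n - 2*l) = n := by omega
        have h3 := hC x hx
        rw [h2] at h3
        exact h3.trans (mul_le_mul_of_nonneg_right (le_max_left _ _)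
          (Real.rpow_nonneg hx.1.le _))
    choose Cf hCf0 hCf using Hf
    choose Cg hCg0 hCg using Hg
    have hpow : ∀ (e E : ℕ), e ≤ E → ∀ x ∈ Set.Ioo (0:ℝ) s,
        x ^ (-(e:ℝ)) ≤ (max 1 s)^E * x ^ (-(E:ℝ)) := by
      intro e E hle x hx
      have hx0 := hx.1
      have heq : x ^ (-(e:ℝ)) = x ^ ((E - e : ℕ) : ℝ) * x ^ (-(E:ℝ)) := by
        rw [← Real.rpow_add hx0]
        congr 1
        have : ((E - e : ℕ) : ℝ) = (E : ℝ) - e := by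
          push_cast [hle]; ring
        rw [this]; ring
      rw [heq, Real.rpow_natCast]
      have h1 : x ^ (E - e) ≤ (max 1 s) ^ (E - e) :=
        pow_le_pow_left₀ hx0.le (hx.2.le.trans (le_max_right 1 s)) _
      have h2 : (max 1 s) ^ (E - e) ≤ (max 1 s) ^ E :=
        pow_le_pow_right₀ (le_max_left 1 s) (Nat.sub_le E e)
      exact mul_le_mul_of_nonneg_right (h1.trans h2) (Real.rpow_nonneg hx0.le _)
    intro n
    refine ⟨∑ i ∈ Finset.range (n+1), (n.choose i : ℝ) * Cf i * Cg (n-i) * (max 1 s)^(n - 2*l),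
      fun x hx => ?_⟩
    have hx0 := hx.1
    refine (leib_aux hf1 hg1 n hx).trans ?_
    rw [Finset.sum_mul]
    refine Finset.sum_le_sum fun i hi => ?_
    have hi' : i ≤ n := Nat.lt_succ_iff.mp (Finset.mem_range.mp hi)
    have hE : (i - 2*k) + ((n - i) - 2*l) ≤ n - 2*l := by omega
    have step1 : (n.choose i : ℝ) * |iteratedDeriv i f x| * |iteratedDeriv (n-i) g x| ≤
        (n.choose i : ℝ) * (Cf i * x ^ (-((i - 2*k : ℕ):ℝ))) *
          (Cg (n-i) * x ^ (-(((n-i) - 2*l : ℕ):ℝ))) := by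
      have h1 := hCf i x hx
      have h2 := hCg (n-i) x hx
      have hc : (0:ℝ) ≤ n.choose i := Nat.cast_nonneg _
      calc (n.choose i : ℝ) * |iteratedDeriv i f x| * |iteratedDeriv (n-i) g x|
          ≤ (n.choose i : ℝ) * (Cf i * x ^ (-((i - 2*k : ℕ):ℝ))) * |iteratedDeriv (n-i) g x| := by
            apply mul_le_mul_of_nonneg_right (mul_le_mul_of_nonneg_left h1 hc) (abs_nonneg _)
        _ ≤ _ := by
            apply mul_le_mul_of_nonneg_left h2
            have := hCf0 i
            positivity
    refine step1.trans ?_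
    have hmul : x ^ (-((i - 2*k : ℕ):ℝ)) * x ^ (-(((n-i) - 2*l : ℕ):ℝ)) =
        x ^ (-(((i - 2*k) + ((n - i) - 2*l) : ℕ):ℝ)) := by
      rw [← Real.rpow_add hx0]
      congr 1
      push_cast; ring
    calc (n.choose i : ℝ) * (Cf i * x ^ (-((i - 2*k : ℕ):ℝ))) *
          (Cg (n-i) * x ^ (-(((n-i) - 2*l : ℕ):ℝ)))
        = (n.choose i : ℝ) * Cf i * Cg (n-i) *
          (x ^ (-((i - 2*k : ℕ):ℝ)) * x ^ (-(((n-i) - 2*l : ℕ):ℝ))) := by ring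
      _ = (n.choose i : ℝ) * Cf i * Cg (n-i) *
          x ^ (-(((i - 2*k) + ((n - i) - 2*l) : ℕ):ℝ)) := by rw [hmul]
      _ ≤ (n.choose i : ℝ) * Cf i * Cg (n-i) *
          ((max 1 s)^(n - 2*l) * x ^ (-((n - 2*l : ℕ):ℝ))) := by
          apply mul_le_mul_of_nonneg_left (hpow _ _ hE x hx)
          have := hCf0 i; have := hCg0 (n-i); positivity
      _ = (n.choose i : ℝ) * Cf i * Cg (n-i) * (max 1 s)^(n - 2*l) * x ^ (-((n - 2*l : ℕ):ℝ)) := by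
          ring
  refine ⟨hf1.mul hg1, ?_, ?_, ?_⟩
  · intro j hj
    obtain ⟨C, hC⟩ := key j
    refine ⟨C, fun x hx => ?_⟩
    have h0 : (j - 2*l : ℕ) = 0 := by omega
    have h1 := hC x hx
    rw [h0] at h1
    simpa using h1
  · intro i hi1 hi2
    set n := 2*i - 1 with hn
    have hmem : Set.Ioo (0:ℝ) s ∈ nhdsWithin 0 (Set.Ioi 0) :=
      Ioo_mem_nhdsGT_of_mem (by simp [hs])
    apply squeeze_zero_norm'
      (a := fun x => ∑ j ∈ Finset.range (n+1), (n.choose j : ℝ) *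
        |iteratedDeriv j f x| * |iteratedDeriv (n-j) g x|)
    · filter_upwards [hmem] with x hx
      simpa [Real.norm_eq_abs] using leib_aux hf1 hg1 n hx
    · have hsum : ∀ j ∈ Finset.range (n+1),
          Filter.Tendsto (fun x => (n.choose j : ℝ) * |iteratedDeriv j f x| *
            |iteratedDeriv (n-j) g x|) (nhdsWithin 0 (Set.Ioi 0)) (nhds 0) := by
        intro j hj
        have hjn : j ≤ n := Nat.lt_succ_iff.mp (Finset.mem_range.mp hj)
        rcases Nat.even_or_odd j with hpar | hpar
        · -- j even, n - j odd
          obtain ⟨t, ht⟩ := hpar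
          obtain ⟨m, hm⟩ : ∃ m, n - j = 2*(m+1) - 1 := ⟨(n - j - 1)/2, by omega⟩
          have htg := hg3 (m+1) (by omega) (by omega)
          rw [← hm] at htg
          obtain ⟨C, hC⟩ := hf2 j (by omega)
          apply squeeze_zero_norm'
            (a := fun x => (n.choose j : ℝ) * max C 0 * |iteratedDeriv (n-j) g x|)
          · filter_upwards [hmem] with x hx
            rw [Real.norm_eq_abs, abs_of_nonneg (by positivity)]
            have h1 : |iteratedDeriv j f x| ≤ max C 0 := (hC x hx).trans (le_max_left _ _)
            exact mul_le_mul_of_nonneg_right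
              (mul_le_mul_of_nonneg_left h1 (Nat.cast_nonneg _)) (abs_nonneg _)
          · have h2 := (htg.abs).const_mul ((n.choose j : ℝ) * max C 0)
            simpa using h2
        · -- j odd
          obtain ⟨t, ht⟩ := hpar
          obtain ⟨m, hm⟩ : ∃ m, j = 2*(m+1) - 1 := ⟨t, by omega⟩
          have htf := hf3 (m+1) (by omega) (by omega)
          rw [← hm] at htf
          obtain ⟨C, hC⟩ := hg2 (n-j) (by omega)
          apply squeeze_zero_norm'
            (a := fun x => (n.choose j : ℝ) * max C 0 * |iteratedDeriv j f x|)
          · filter_upwards [hmem] with x hx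
            rw [Real.norm_eq_abs, abs_of_nonneg (by positivity)]
            have h1 : |iteratedDeriv (n-j) g x| ≤ max C 0 := (hC x hx).trans (le_max_left _ _)
            have h2 : (n.choose j : ℝ) * |iteratedDeriv j f x| * |iteratedDeriv (n-j) g x|
                ≤ (n.choose j : ℝ) * |iteratedDeriv j f x| * max C 0 :=
              mul_le_mul_of_nonneg_left h1 (by positivity)
            linarith [h2]
          · have h2 := (htf.abs).const_mul ((n.choose j : ℝ) * max C 0)
            simpa using h2
      have h3 := tendsto_finset_sum (Finset.range (n+1)) hsum
      simpa using h3
  · intro j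
    obtain ⟨C, hC⟩ := key (2*l + j)
    refine ⟨C, fun x hx => ?_⟩
    have h0 : (2*l + j - 2*l : ℕ) = j := by omega
    have h1 := hC x hx
    rw [h0] at h1
    exact h1
end
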